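/- Soundness of the separable-to-entangled rule (total correctness): let E be a quantum operation with dual E* satisfying E*(I) ⊑ I, let A, B be quantum predicates, and 0 < ε ≤ 1. If (1-ε)I + εA ⊑ E*((1-ε)I + εB), then A ⊑ E*(B). -/

import Mathlib

/-!
Write `Φ` for the dual `E*`. Linearity of `Φ` gives
`ε • (Φ B - A) = (Φ((1-ε)I + εB) - ((1-ε)I + εA)) + (1-ε) • (I - Φ I)`,
a sum of two positive semidefinite matrices (the hypothesis and subunitality of `Φ`, using
`ε ≤ 1`); dividing by `ε > 0` gives `A ⊑ Φ B`.
-/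

open Matrix
open scoped ComplexOrder

variable {n ι : Type*}

theorem Matrix.PosSemidef.of_real_smul {M : Matrix n n ℂ} {c : ℝ} (hc : 0 < c)
    (hM : ((c : ℂ) • M).PosSemidef) : M.PosSemidef := by
  have h := hM.smul (Complex.zero_le_real.mpr (inv_pos.mpr hc).le)
  rwa [smul_smul, ← Complex.ofReal_mul, inv_mul_cancel₀ hc.ne', Complex.ofReal_one,
    one_smul] at h

/-- The dual `E*` of the quantum operation with Kraus operators `E`. -/
def krausDual [Fintype n] [Fintype ι] (E : ι → Matrix n n ℂ) :
    Matrix n n ℂ →ₗ[ℂ] Matrix n n ℂ where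
  toFun X := ∑ i, (E i)ᴴ * X * E i
  map_add' X Y := by simp only [Matrix.mul_add, Matrix.add_mul, Finset.sum_add_distrib]
  map_smul' c X := by
    simp only [Matrix.mul_smul, Matrix.smul_mul, Finset.smul_sum, RingHom.id_apply]

theorem krausDual_apply [Fintype n] [Fintype ι] (E : ι → Matrix n n ℂ) (X : Matrix n n ℂ) :
    krausDual E X = ∑ i, (E i)ᴴ * X * E i := rfl

theorem krausDual_one [Fintype n] [DecidableEq n] [Fintype ι] (E : ι → Matrix n n ℂ) :
    krausDual E 1 = ∑ i, (E i)ᴴ * E i := by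
  simp only [krausDual_apply, Matrix.mul_one]

theorem posSemidef_sub_of_posSemidef_sub_affine [Fintype n] [DecidableEq n]
    (Φ : Matrix n n ℂ →ₗ[ℂ] Matrix n n ℂ)
    (hΦ : (1 - Φ 1).PosSemidef) {A B : Matrix n n ℂ} {ε : ℝ} (hε : 0 < ε) (hε' : ε ≤ 1)
    (h : (Φ (((1 - ε : ℝ) : ℂ) • 1 + (ε : ℂ) • B)
        - (((1 - ε : ℝ) : ℂ) • 1 + (ε : ℂ) • A)).PosSemidef) :
    (Φ B - A).PosSemidef := by
  have hsplit : (ε : ℂ) • (Φ B - A) = (Φ (((1 - ε : ℝ) : ℂ) • 1 + (ε : ℂ) • B)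
      - (((1 - ε : ℝ) : ℂ) • 1 + (ε : ℂ) • A)) + ((1 - ε : ℝ) : ℂ) • (1 - Φ 1) := by
    simp only [map_add, map_smul]
    module
  refine .of_real_smul hε ?_
  rw [hsplit]
  exact h.add (hΦ.smul (Complex.zero_le_real.mpr (sub_nonneg.mpr hε')))

theorem S2E_rule_sound_total_general {d k : ℕ}
    (E : Fin k → Matrix (Fin d) (Fin d) ℂ)
    (hE : ((1 : Matrix (Fin d) (Fin d) ℂ) - ∑ i, (E i)ᴴ * E i).PosSemidef)
    (A B : Matrix (Fin d) (Fin d) ℂ)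
    (ε : ℝ) (hε : 0 < ε) (hε' : ε ≤ 1)
    (hcorrect :
      ((∑ i, (E i)ᴴ * (((1 - ε : ℝ) : ℂ) • (1 : Matrix (Fin d) (Fin d) ℂ) + (ε : ℂ) • B) * E i)
        - (((1 - ε : ℝ) : ℂ) • (1 : Matrix (Fin d) (Fin d) ℂ) + (ε : ℂ) • A)).PosSemidef) :
    ((∑ i, (E i)ᴴ * B * E i) - A).PosSemidef := by
  rw [← krausDual_one] at hE
  exact posSemidef_sub_of_posSemidef_sub_affine (krausDual E) hE hε hε' hcorrect

/-- Soundness of rule (R.S2E) for total correctness: if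
`(1-ε)I + εA ⊑ E*((1-ε)I + εB)` for some `0 < ε ≤ 1`, then `A ⊑ E*(B)`. -/
theorem S2E_rule_sound_total {d k : ℕ}
    (E : Fin k → Matrix (Fin d) (Fin d) ℂ)
    (hE : ((1 : Matrix (Fin d) (Fin d) ℂ) - ∑ i, (E i)ᴴ * E i).PosSemidef)
    (A B : Matrix (Fin d) (Fin d) ℂ)
    (hA : A.PosSemidef) (hA' : ((1 : Matrix (Fin d) (Fin d) ℂ) - A).PosSemidef)
    (hB : B.PosSemidef) (hB' : ((1 : Matrix (Fin d) (Fin d) ℂ) - B).PosSemidef)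
    (ε : ℝ) (hε : 0 < ε) (hε' : ε ≤ 1)
    (hcorrect :
      ((∑ i, (E i)ᴴ * (((1 - ε : ℝ) : ℂ) • (1 : Matrix (Fin d) (Fin d) ℂ) + (ε : ℂ) • B) * E i)
        - (((1 - ε : ℝ) : ℂ) • (1 : Matrix (Fin d) (Fin d) ℂ) + (ε : ℂ) • A)).PosSemidef) :
    ((∑ i, (E i)ᴴ * B * E i) - A).PosSemidef :=
  S2E_rule_sound_total_general E hE A B ε hε hε' hcorrect
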